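/- Let V ⊆ ℝⁿ be a linear subspace spanned by vectors with rational coordinates, and let P = p + V be an affine translate of V (p ∈ ℝⁿ). Then P is additive (closed under coordinatewise maximum) if and only if there exist finitely many simple tropical polynomials f₁, …, f_s in n variables such that P = Z(f₁) ∩ ⋯ ∩ Z(f_s). -/

import Mathlib

/-- A tropical polynomial in `n` variables: a finite nonempty set of exponent
vectors in `ℕⁿ` together with real coefficients. -/
structure TropPoly (n : ℕ) where
  supp : Finset (Fin n → ℕ)
  supp_nonempty : supp.Nonempty
  coeff : (Fin n → ℕ) → ℝ

namespace TropPoly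

variable {n : ℕ}

/-- The value at `u` of the monomial of exponent `ω`. -/
def mono (f : TropPoly n) (ω : Fin n → ℕ) (u : Fin n → ℝ) : ℝ :=
  (∑ i, (ω i : ℝ) * u i) + f.coeff ω

/-- The piecewise-linear convex function defined by a tropical polynomial:
`f(u) = max_{ω ∈ Ω} (⟨ω, u⟩ + A(ω))`. -/
def eval (f : TropPoly n) (u : Fin n → ℝ) : ℝ :=
  f.supp.sup' f.supp_nonempty (fun ω => f.mono ω u)

/-- The corner locus of a tropical polynomial: the set of points where the
maximum is attained by at least two distinct exponent vectors. -/
def Z (f : TropPoly n) : Set (Fin n → ℝ) :=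
  {u | ∃ ω ∈ f.supp, ∃ τ ∈ f.supp, ω ≠ τ ∧
    f.mono ω u = f.eval u ∧ f.mono τ u = f.eval u}

/-- A tropical polynomial is simple if every exponent vector has at most one
nonzero coordinate (i.e., all monomials are univariate or constant). -/
def Simple (f : TropPoly n) : Prop :=
  ∀ ω ∈ f.supp, ∀ i j : Fin n, ω i ≠ 0 → ω j ≠ 0 → i = j

end TropPoly

namespace TropPoly

variable {n : ℕ}

lemma mono_sup (f : TropPoly n) {ω : Fin n → ℕ}
    (hω : ∀ i j : Fin n, ω i ≠ 0 → ω j ≠ 0 → i = j) (u v : Fin n → ℝ) :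
    f.mono ω (u ⊔ v) = f.mono ω u ⊔ f.mono ω v := by
  have key : (∑ i, (ω i : ℝ) * (u ⊔ v) i)
      = (∑ i, (ω i : ℝ) * u i) ⊔ (∑ i, (ω i : ℝ) * v i) := by
    by_cases h : ∀ i, ω i = 0
    · simp [h]
    · push_neg at h
      obtain ⟨i₀, hi₀⟩ := h
      have hs : ∀ x : Fin n → ℝ, (∑ i, (ω i : ℝ) * x i) = (ω i₀ : ℝ) * x i₀ := by
        intro x
        refine Finset.sum_eq_single i₀ (fun l _ hl => ?_) (by simp)
        have : ω l = 0 := by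
          by_contra hc
          exact hl (hω l i₀ hc hi₀)
        simp [this]
      rw [hs, hs, hs]
      have hnn : (0:ℝ) ≤ (ω i₀ : ℝ) := by positivity
      have : (u ⊔ v) i₀ = u i₀ ⊔ v i₀ := rfl
      rw [this, mul_max_of_nonneg _ _ hnn]
  unfold mono
  rw [key, max_add_add_right]

lemma mono_le_eval (f : TropPoly n) {ω : Fin n → ℕ} (hω : ω ∈ f.supp) (u : Fin n → ℝ) :
    f.mono ω u ≤ f.eval u :=
  Finset.le_sup' (fun ω => f.mono ω u) hω

lemma eval_sup {f : TropPoly n} (hf : f.Simple) (u v : Fin n → ℝ) :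
    f.eval (u ⊔ v) = f.eval u ⊔ f.eval v := by
  apply le_antisymm
  · apply Finset.sup'_le
    intro ω hω
    rw [f.mono_sup (hf ω hω) u v]
    exact sup_le_sup (f.mono_le_eval hω u) (f.mono_le_eval hω v)
  · apply sup_le
    · apply Finset.sup'_le
      intro ω hω
      refine le_trans ?_ (f.mono_le_eval hω (u ⊔ v))
      rw [f.mono_sup (hf ω hω) u v]
      exact le_sup_left
    · apply Finset.sup'_le
      intro ω hω
      refine le_trans ?_ (f.mono_le_eval hω (u ⊔ v))
      rw [f.mono_sup (hf ω hω) u v]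
      exact le_sup_right

lemma Z_additive {f : TropPoly n} (hf : f.Simple) {u v : Fin n → ℝ}
    (hu : u ∈ f.Z) (hv : v ∈ f.Z) : u ⊔ v ∈ f.Z := by
  have hev := eval_sup hf u v
  rcases le_total (f.eval v) (f.eval u) with h | h
  · obtain ⟨ω, hω, τ, hτ, hne, h1, h2⟩ := hu
    refine ⟨ω, hω, τ, hτ, hne, ?_, ?_⟩
    · rw [f.mono_sup (hf _ hω) u v, hev, sup_eq_left.mpr h,
        sup_eq_left.mpr (((f.mono_le_eval hω v).trans h).trans h1.ge), h1]
    · rw [f.mono_sup (hf _ hτ) u v, hev, sup_eq_left.mpr h,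
        sup_eq_left.mpr (((f.mono_le_eval hτ v).trans h).trans h2.ge), h2]
  · obtain ⟨ω, hω, τ, hτ, hne, h1, h2⟩ := hv
    refine ⟨ω, hω, τ, hτ, hne, ?_, ?_⟩
    · rw [f.mono_sup (hf _ hω) u v, hev, sup_eq_right.mpr h,
        sup_eq_right.mpr (((f.mono_le_eval hω u).trans h).trans h1.ge), h1]
    · rw [f.mono_sup (hf _ hτ) u v, hev, sup_eq_right.mpr h,
        sup_eq_right.mpr (((f.mono_le_eval hτ u).trans h).trans h2.ge), h2]

/-- Corner locus of a two-monomial tropical polynomial. -/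
lemma Z_pair {f : TropPoly n} {ω τ : Fin n → ℕ} (hne : ω ≠ τ)
    (hsupp : f.supp = {ω, τ}) (x : Fin n → ℝ) :
    x ∈ f.Z ↔ f.mono ω x = f.mono τ x := by
  classical
  have hev : f.eval x = f.mono ω x ⊔ f.mono τ x := by
    unfold eval
    rw [Finset.sup'_congr f.supp_nonempty hsupp (fun _ _ => rfl)]
    rw [Finset.sup'_insert, Finset.sup'_singleton]
    exact Finset.singleton_nonempty τ
  constructor
  · rintro ⟨σ₁, h₁, σ₂, h₂, hne12, e1, e2⟩
    rw [hsupp] at h₁ h₂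
    simp only [Finset.mem_insert, Finset.mem_singleton] at h₁ h₂
    rcases h₁ with rfl | rfl <;> rcases h₂ with rfl | rfl
    · exact absurd rfl hne12
    · exact e1.trans e2.symm
    · exact e2.trans e1.symm
    · exact absurd rfl hne12
  · intro h
    refine ⟨ω, by simp [hsupp], τ, by simp [hsupp], hne, ?_, ?_⟩
    · rw [hev, h, sup_idem]
    · rw [hev, h, sup_idem]

/-- exponent vector supported at one coordinate -/
def sing (i : Fin n) (a : ℕ) : Fin n → ℕ := fun l => if l = i then a else 0

lemma sum_sing (i : Fin n) (a : ℕ) (x : Fin n → ℝ) :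
    (∑ l, ((sing i a l : ℕ) : ℝ) * x l) = (a : ℝ) * x i := by
  rw [Finset.sum_eq_single i]
  · simp [sing]
  · intro l _ hl
    simp [sing, hl]
  · simp

def pairPoly (i j : Fin n) (a b : ℕ) (ci cj : ℝ) : TropPoly n :=
  ⟨{sing i a, sing j b}, ⟨sing i a, Finset.mem_insert_self _ _⟩,
    fun σ => if σ = sing i a then ci else cj⟩

lemma pairPoly_simple (i j : Fin n) (a b : ℕ) (ci cj : ℝ) :
    (pairPoly i j a b ci cj).Simple := by
  intro ω hω l m hl hm
  simp only [pairPoly, Finset.mem_insert, Finset.mem_singleton] at hω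
  rcases hω with rfl | rfl
  · simp only [sing] at hl hm
    by_cases h1 : l = i
    · by_cases h2 : m = i
      · rw [h1, h2]
      · simp [h2] at hm
    · simp [h1] at hl
  · simp only [sing] at hl hm
    by_cases h1 : l = j
    · by_cases h2 : m = j
      · rw [h1, h2]
      · simp [h2] at hm
    · simp [h1] at hl

lemma pairPoly_Z (i j : Fin n) (a b : ℕ) (ci cj : ℝ)
    (hne : sing i a ≠ sing j b) (x : Fin n → ℝ) :
    x ∈ (pairPoly i j a b ci cj).Z ↔ (a : ℝ) * x i + ci = (b : ℝ) * x j + cj := by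
  have hm1 : (pairPoly i j a b ci cj).mono (sing i a) x = (a : ℝ) * x i + ci := by
    unfold mono pairPoly
    rw [sum_sing]
    simp
  have hm2 : (pairPoly i j a b ci cj).mono (sing j b) x = (b : ℝ) * x j + cj := by
    unfold mono pairPoly
    rw [sum_sing]
    simp [hne.symm]
  rw [Z_pair hne rfl x, hm1, hm2]

end TropPoly


lemma recon {K : Type*} [Field K] {d n : ℕ} (B : Fin d → Fin n → K)
    (hdisj : ∀ k l, k ≠ l → ∀ i, B k i = 0 ∨ B l i = 0)
    (hnz : ∀ k, ∃ i, B k i ≠ 0) (u : Fin n → K)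
    (h1 : ∀ i, (∀ k, B k i = 0) → u i = 0)
    (h2 : ∀ k i j, B k i ≠ 0 → B k j ≠ 0 → B k j * u i = B k i * u j) :
    ∃ c : Fin d → K, u = ∑ k, c k • B k := by
  choose pick hpick using hnz
  refine ⟨fun k => u (pick k) / B k (pick k), funext fun i => ?_⟩
  simp only [Finset.sum_apply, Pi.smul_apply, smul_eq_mul]
  by_cases hcov : ∀ k, B k i = 0
  · rw [h1 i hcov]
    exact (Finset.sum_eq_zero fun k _ => by rw [hcov k, mul_zero]).symm
  · push_neg at hcov
    obtain ⟨k₀, hk₀⟩ := hcov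
    rw [Finset.sum_eq_single k₀ (fun l _ hl => ?_) (by simp)]
    · have h := h2 k₀ i (pick k₀) hk₀ (hpick k₀)
      rw [div_mul_eq_mul_div, eq_div_iff (hpick k₀)]
      linear_combination h
    · rcases hdisj l k₀ hl i with h | h
      · rw [h, mul_zero]
      · exact absurd h hk₀
  done

lemma inf_mem_of_additive {n : ℕ} (W : Submodule ℚ (Fin n → ℚ))
    (hadd : ∀ u ∈ W, ∀ v ∈ W, u ⊔ v ∈ W) {u v : Fin n → ℚ}
    (hu : u ∈ W) (hv : v ∈ W) : u ⊓ v ∈ W := by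
  have h : u ⊓ v = -((-u) ⊔ (-v)) := by
    funext i
    simp only [Pi.inf_apply, Pi.sup_apply, Pi.neg_apply,
      max_neg_neg, neg_neg]
  rw [h]
  exact neg_mem (hadd _ (neg_mem hu) _ (neg_mem hv))

lemma disjq {n : ℕ} : ∀ (m : ℕ) (T : Finset (Fin n)), T.card ≤ m →
    ∀ (W : Submodule ℚ (Fin n → ℚ)),
    (∀ u ∈ W, ∀ v ∈ W, u ⊔ v ∈ W) →
    (∀ w ∈ W, ∀ i, i ∉ T → w i = 0) →
    ∃ (d : ℕ) (B : Fin d → Fin n → ℚ),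
      (∀ k, (B k) ∈ W) ∧ (∀ k i, 0 ≤ B k i) ∧ (∀ k, ∃ i, B k i ≠ 0) ∧
      (∀ k l, k ≠ l → ∀ i, B k i = 0 ∨ B l i = 0) ∧
      (∀ u, u ∈ W ↔ ((∀ i, (∀ k, B k i = 0) → u i = 0) ∧
        ∀ k i j, B k i ≠ 0 → B k j ≠ 0 → B k j * u i = B k i * u j)) := by
  intro m
  induction m with
  | zero =>
    intro T hT W hadd hsupp
    have hW : W = ⊥ := by
      rw [Submodule.eq_bot_iff]
      intro w hw
      funext i
      have : i ∉ T := by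
        intro hi
        have := Finset.card_pos.mpr ⟨i, hi⟩
        omega
      exact hsupp w hw i this
    refine ⟨0, Fin.elim0, fun k => k.elim0, fun k => k.elim0, fun k => k.elim0,
      fun k => k.elim0, fun u => ?_⟩
    subst hW
    simp only [Submodule.mem_bot]
    constructor
    · rintro rfl
      exact ⟨fun i _ => rfl, fun k => k.elim0⟩
    · rintro ⟨h1, _⟩
      funext i
      exact h1 i (fun k => k.elim0)
  | succ m ih =>
    intro T hT W hadd hsupp
    classical
    by_cases hbot : W = ⊥
    · refine ⟨0, Fin.elim0, fun k => k.elim0, fun k => k.elim0, fun k => k.elim0,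
        fun k => k.elim0, fun u => ?_⟩
      subst hbot
      simp only [Submodule.mem_bot]
      constructor
      · rintro rfl
        exact ⟨fun i _ => rfl, fun k => k.elim0⟩
      · rintro ⟨h1, _⟩
        funext i
        exact h1 i (fun k => k.elim0)
    · obtain ⟨w₀, hw₀W, hw₀ne⟩ := Submodule.exists_mem_ne_zero_of_ne_bot hbot
      -- a nonzero nonnegative element
      have hv₀ : ∃ v, v ∈ W ∧ (∀ i, 0 ≤ v i) ∧ v ≠ 0 := by
        refine ⟨w₀ ⊔ (-w₀), hadd _ hw₀W _ (neg_mem hw₀W), fun i => ?_, fun h => ?_⟩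
        · rcases le_total 0 (w₀ i) with h | h
          · exact le_trans h le_sup_left
          · exact le_trans (neg_nonneg.mpr h) le_sup_right
        · apply hw₀ne
          funext i
          have hi := congrFun h i
          simp only [Pi.sup_apply, Pi.neg_apply, Pi.zero_apply] at hi ⊢
          rcases max_choice (w₀ i) (-(w₀ i)) with hc | hc <;> rw [hc] at hi <;> linarith
      -- minimal support positive element
      set sc : (Fin n → ℚ) → ℕ := fun v => (Finset.univ.filter (fun i => v i ≠ 0)).card with hsc
      have hex : ∃ c : ℕ, ∃ v, (v ∈ W ∧ (∀ i, 0 ≤ v i) ∧ v ≠ 0) ∧ sc v = c := by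
        obtain ⟨v, hv⟩ := hv₀
        exact ⟨sc v, v, hv, rfl⟩
      obtain ⟨b, ⟨hbW, hb0, hbne⟩, hbsc⟩ := Nat.find_spec hex
      have hmin : ∀ v, v ∈ W → (∀ i, 0 ≤ v i) → v ≠ 0 → Nat.find hex ≤ sc v :=
        fun v h1 h2 h3 => Nat.find_min' hex ⟨v, ⟨h1, h2, h3⟩, rfl⟩
      -- proportionality on the support of b
      have claim : ∀ w ∈ W, ∀ i j, b i ≠ 0 → b j ≠ 0 → ¬ (w i * b j < w j * b i) := by
        intro w hw i j hbi hbj hlt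
        have hbi' : 0 < b i := lt_of_le_of_ne (hb0 i) (Ne.symm hbi)
        have hbj' : 0 < b j := lt_of_le_of_ne (hb0 j) (Ne.symm hbj)
        set t : ℚ := w i / b i with ht
        set z : Fin n → ℚ := ((w - t • b) ⊔ 0) ⊓ b with hzdef
        have hzW : z ∈ W :=
          inf_mem_of_additive W hadd
            (hadd _ (sub_mem hw (Submodule.smul_mem W t hbW)) _ (zero_mem W)) hbW
        have hz : ∀ l, z l = min (max (w l - t * b l) 0) (b l) := fun l => rfl
        have hz0 : ∀ l, 0 ≤ z l := fun l => by
          rw [hz]; exact le_min (le_max_right _ 0) (hb0 l)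
        have hzi : z i = 0 := by
          rw [hz]
          rw [div_mul_cancel₀ _ hbi]
          simp [hb0 i]
        have hzj : 0 < z j := by
          have h1 : t * b j < w j := by
            rw [ht, div_mul_eq_mul_div, div_lt_iff₀ hbi']
            linarith
          rw [hz]
          have : 0 < w j - t * b j := by linarith
          exact lt_min (by rw [max_eq_left this.le]; exact this) hbj'
        have hzsupp : ∀ l, b l = 0 → z l = 0 := by
          intro l hl
          refine le_antisymm ?_ (hz0 l)
          rw [hz, hl]
          exact min_le_right _ _
        have hzne : z ≠ 0 := fun h => by
          rw [congrFun h j] at hzj; exact lt_irrefl _ hzj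
        have hsub : (Finset.univ.filter (fun l => z l ≠ 0)) ⊂
            (Finset.univ.filter (fun l => b l ≠ 0)) := by
          constructor
          · intro l hl
            simp only [Finset.mem_filter, Finset.mem_univ, true_and] at hl ⊢
            intro hbl
            exact hl (hzsupp l hbl)
          · intro hcon
            have hi1 : i ∈ Finset.univ.filter (fun l => b l ≠ 0) := by
              simp [hbi]
            have := hcon hi1
            simp only [Finset.mem_filter, Finset.mem_univ, true_and] at this
            exact this hzi
        have hlt2 : sc z < sc b := Finset.card_lt_card hsub
        have := hmin z hzW hz0 hzne
        omega
      have prop : ∀ w ∈ W, ∀ i j, b i ≠ 0 → b j ≠ 0 → b j * w i = b i * w j := by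
        intro w hw i j hbi hbj
        have h1 := claim w hw i j hbi hbj
        have h2 := claim w hw j i hbj hbi
        push_neg at h1 h2
        have := le_antisymm h2 h1
        linarith [this]
      obtain ⟨i₀, hbi₀⟩ := Function.ne_iff.mp hbne
      rw [Pi.zero_apply] at hbi₀
      -- recurse
      set Tb : Finset (Fin n) := Finset.univ.filter (fun i => b i ≠ 0) with hTbdef
      have hTbT : Tb ⊆ T := by
        intro i hi
        simp only [hTbdef, Finset.mem_filter, Finset.mem_univ, true_and] at hi
        by_contra hc
        exact hi (hsupp b hbW i hc)
      have hTbne : i₀ ∈ Tb := by simp [hTbdef, hbi₀]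
      set T' : Finset (Fin n) := T \ Tb with hT'def
      have hT' : T'.card ≤ m := by
        have h1 : T'.card = T.card - Tb.card := Finset.card_sdiff_of_subset hTbT
        have h2 : 0 < Tb.card := Finset.card_pos.mpr ⟨i₀, hTbne⟩
        omega
      set W' : Submodule ℚ (Fin n → ℚ) :=
        W ⊓ LinearMap.ker (LinearMap.proj i₀ : (Fin n → ℚ) →ₗ[ℚ] ℚ) with hW'def
      have hmemW' : ∀ v, v ∈ W' ↔ v ∈ W ∧ v i₀ = 0 := by
        intro v
        simp [hW'def, Submodule.mem_inf, LinearMap.mem_ker]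
      have hadd' : ∀ u ∈ W', ∀ v ∈ W', u ⊔ v ∈ W' := by
        intro u hu v hv
        rw [hmemW'] at hu hv ⊢
        refine ⟨hadd _ hu.1 _ hv.1, ?_⟩
        show max (u i₀) (v i₀) = 0
        rw [hu.2, hv.2, max_self]
      have hzeroTb : ∀ w ∈ W', ∀ i, b i ≠ 0 → w i = 0 := by
        intro w hw i hbi
        rw [hmemW'] at hw
        have := prop w hw.1 i i₀ hbi hbi₀
        rw [hw.2, mul_zero] at this
        exact (mul_eq_zero.mp this).resolve_left hbi₀
      have hsupp' : ∀ w ∈ W', ∀ i, i ∉ T' → w i = 0 := by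
        intro w hw i hi
        rw [hT'def, Finset.mem_sdiff] at hi
        push_neg at hi
        by_cases hiT : i ∈ T
        · have := hi hiT
          simp only [hTbdef, Finset.mem_filter, Finset.mem_univ, true_and] at this
          exact hzeroTb w hw i this
        · exact hsupp w ((hmemW' w).mp hw).1 i hiT
      obtain ⟨d', B', hB'W, hB'0, hB'nz, hB'disj, hB'char⟩ := ih T' hT' W' hadd' hsupp'
      set BB : Fin (d' + 1) → Fin n → ℚ := Fin.cons b B' with hBBdef
      have hBW : ∀ k, BB k ∈ W := by
        intro k
        rcases Fin.eq_zero_or_eq_succ k with rfl | ⟨k', rfl⟩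
        · simpa [hBBdef] using hbW
        · simpa [hBBdef] using ((hmemW' _).mp (hB'W k')).1
      have hBnn : ∀ k i, (0:ℚ) ≤ BB k i := by
        intro k i
        rcases Fin.eq_zero_or_eq_succ k with rfl | ⟨k', rfl⟩
        · simpa [hBBdef] using hb0 i
        · simpa [hBBdef] using hB'0 k' i
      have hBnz : ∀ k, ∃ i, BB k i ≠ 0 := by
        intro k
        rcases Fin.eq_zero_or_eq_succ k with rfl | ⟨k', rfl⟩
        · exact ⟨i₀, by simpa [hBBdef] using hbi₀⟩
        · obtain ⟨i, hi⟩ := hB'nz k'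
          exact ⟨i, by simpa [hBBdef] using hi⟩
      have key : ∀ (l : Fin d') (i : Fin n), b i = 0 ∨ B' l i = 0 := by
        intro l i
        by_cases hbi : b i = 0
        · exact Or.inl hbi
        · refine Or.inr (hsupp' (B' l) (hB'W l) i ?_)
          rw [hT'def, Finset.mem_sdiff]
          push_neg
          intro _
          simp [hTbdef, hbi]
      have hBdisj : ∀ k l, k ≠ l → ∀ i, BB k i = 0 ∨ BB l i = 0 := by
        intro k l hkl i
        rcases Fin.eq_zero_or_eq_succ k with rfl | ⟨k', rfl⟩ <;>
          rcases Fin.eq_zero_or_eq_succ l with rfl | ⟨l', rfl⟩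
        · exact absurd rfl hkl
        · simpa [hBBdef] using key l' i
        · simpa [hBBdef] using (key k' i).symm
        · simp only [hBBdef, Fin.cons_succ]
          exact hB'disj k' l' (fun h => hkl (by rw [h])) i
      refine ⟨d' + 1, BB, hBW, hBnn, hBnz, hBdisj, ?_⟩
      intro u
      constructor
      · intro hu
        set c : ℚ := u i₀ / b i₀ with hc
        set u' : Fin n → ℚ := u - c • b with hu'def
        have hu'W' : u' ∈ W' := by
          rw [hmemW']
          refine ⟨sub_mem hu (Submodule.smul_mem W c hbW), ?_⟩
          have : u' i₀ = u i₀ - c * b i₀ := rfl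
          rw [this, hc, div_mul_cancel₀ _ hbi₀, sub_self]
        have hIH := (hB'char u').mp hu'W'
        have hbz : ∀ i, b i = 0 → u i = u' i := by
          intro i hbi
          have : u' i = u i - c * b i := rfl
          rw [this, hbi, mul_zero, sub_zero]
        constructor
        · intro i hi
          have hb : b i = 0 := by
            have := hi 0
            rwa [hBBdef, Fin.cons_zero] at this
          rw [hbz i hb]
          exact hIH.1 i (fun k => by have := hi k.succ; rwa [hBBdef, Fin.cons_succ] at this)
        · intro k i j
          rcases Fin.eq_zero_or_eq_succ k with rfl | ⟨k', rfl⟩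
          · simp only [hBBdef, Fin.cons_zero]
            exact prop u hu i j
          · simp only [hBBdef, Fin.cons_succ]
            intro hi hj
            have hbzi : b i = 0 := by
              by_contra hbi
              refine hi (hsupp' (B' k') (hB'W k') i ?_)
              rw [hT'def, Finset.mem_sdiff]
              push_neg
              intro _
              simp [hTbdef, hbi]
            have hbzj : b j = 0 := by
              by_contra hbj
              refine hj (hsupp' (B' k') (hB'W k') j ?_)
              rw [hT'def, Finset.mem_sdiff]
              push_neg
              intro _
              simp [hTbdef, hbj]
            rw [hbz i hbzi, hbz j hbzj]
            exact hIH.2 k' i j hi hj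
      · rintro ⟨h1, h2⟩
        obtain ⟨c, hceq⟩ := recon (BB) hBdisj hBnz u h1 h2
        rw [hceq]
        exact Submodule.sum_mem W (fun k _ => Submodule.smul_mem W _ (hBW k))

def ratPoints {n : ℕ} (V : Submodule ℝ (Fin n → ℝ)) : Submodule ℚ (Fin n → ℚ) where
  carrier := {v | (fun i => ((v i : ℚ) : ℝ)) ∈ V}
  add_mem' := by
    intro a b ha hb
    simp only [Set.mem_setOf_eq] at *
    have h : (fun i => (((a + b) i : ℚ) : ℝ))
        = (fun i => ((a i : ℚ) : ℝ)) + (fun i => ((b i : ℚ) : ℝ)) := by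
      funext i
      simp only [Pi.add_apply]
      push_cast
      ring
    rw [h]
    exact add_mem ha hb
  zero_mem' := by
    simp only [Set.mem_setOf_eq]
    have h : (fun i : Fin n => (((0 : Fin n → ℚ) i : ℚ) : ℝ)) = 0 := by
      funext i; simp
    rw [h]
    exact zero_mem V
  smul_mem' := by
    intro q v hv
    simp only [Set.mem_setOf_eq] at *
    have h : (fun i => (((q • v) i : ℚ) : ℝ)) = (q : ℝ) • (fun i => ((v i : ℚ) : ℝ)) := by
      funext i
      simp only [Pi.smul_apply, smul_eq_mul]
      push_cast
      ring
    rw [h]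
    exact V.smul_mem _ hv

lemma mem_ratPoints {n : ℕ} (V : Submodule ℝ (Fin n → ℝ)) (v : Fin n → ℚ) :
    v ∈ ratPoints V ↔ (fun i => ((v i : ℚ) : ℝ)) ∈ V := Iff.rfl

lemma final_construction {n d : ℕ} (B : Fin d → Fin n → ℚ) (hB0 : ∀ k i, 0 ≤ B k i)
    (p : Fin n → ℝ) (P : Set (Fin n → ℝ))
    (hPmem : ∀ x, x ∈ P ↔
      ((∀ i, (∀ k, B k i = 0) → x i - p i = 0) ∧
       ∀ k i j, B k i ≠ 0 → B k j ≠ 0 →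
         ((B k j : ℚ) : ℝ) * (x i - p i) = ((B k i : ℚ) : ℝ) * (x j - p j))) :
    ∃ (s : ℕ) (f : Fin s → TropPoly n),
      (∀ i, (f i).Simple) ∧ P = ⋂ i, (f i).Z := by
  classical
  set Good : ((Fin d × Fin n × Fin n) ⊕ Fin n) → Prop := Sum.elim
      (fun t => B t.1 t.2.1 ≠ 0 ∧ B t.1 t.2.2 ≠ 0 ∧ t.2.1 ≠ t.2.2)
      (fun i => ∀ k, B k i = 0) with hGood
  set Con : ((Fin d × Fin n × Fin n) ⊕ Fin n) → (Fin n → ℝ) → Prop := fun κ x => Sum.elim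
      (fun t => ((B t.1 t.2.2 : ℚ) : ℝ) * (x t.2.1 - p t.2.1)
        = ((B t.1 t.2.1 : ℚ) : ℝ) * (x t.2.2 - p t.2.2))
      (fun i => x i - p i = 0) κ with hCon
  have hPcon : ∀ x, x ∈ P ↔ ∀ κ, Good κ → Con κ x := by
    intro x
    rw [hPmem]
    constructor
    · rintro ⟨h1, h2⟩ κ hκ
      cases κ with
      | inl t =>
        simp only [hGood, Sum.elim_inl] at hκ
        simp only [hCon, Sum.elim_inl]
        exact h2 t.1 t.2.1 t.2.2 hκ.1 hκ.2.1
      | inr i =>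
        simp only [hGood, Sum.elim_inr] at hκ
        simp only [hCon, Sum.elim_inr]
        exact h1 i hκ
    · intro h
      constructor
      · intro i hi
        have := h (Sum.inr i) (by simp only [hGood, Sum.elim_inr]; exact hi)
        simpa only [hCon, Sum.elim_inr] using this
      · intro k i j hbi hbj
        by_cases hij : i = j
        · subst hij; rfl
        · have := h (Sum.inl (k, i, j))
            (by simp only [hGood, Sum.elim_inl]; exact ⟨hbi, hbj, hij⟩)
          simpa only [hCon, Sum.elim_inl] using this
  by_cases hE : ∃ κ, Good κ
  · obtain ⟨κ₀, hκ₀⟩ := hE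
    set g : ((Fin d × Fin n × Fin n) ⊕ Fin n) → ((Fin d × Fin n × Fin n) ⊕ Fin n) :=
      fun κ => if Good κ then κ else κ₀ with hg
    have hgGood : ∀ κ, Good (g κ) := by
      intro κ
      by_cases h : Good κ
      · simpa only [hg, if_pos h] using h
      · simpa only [hg, if_neg h] using hκ₀
    set poly : ((Fin d × Fin n × Fin n) ⊕ Fin n) → TropPoly n := Sum.elim
        (fun t => TropPoly.pairPoly t.2.1 t.2.2
          (((B t.1 t.2.2).num * ((B t.1 t.2.1).den : ℤ)).toNat)
          (((B t.1 t.2.1).num * ((B t.1 t.2.2).den : ℤ)).toNat)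
          (-((((B t.1 t.2.2).num * ((B t.1 t.2.1).den : ℤ)).toNat : ℕ) : ℝ) * p t.2.1)
          (-((((B t.1 t.2.1).num * ((B t.1 t.2.2).den : ℤ)).toNat : ℕ) : ℝ) * p t.2.2))
        (fun i => TropPoly.pairPoly i i 1 0 (-(p i)) 0) with hpoly
    have hsimple : ∀ κ, (poly κ).Simple := by
      intro κ
      cases κ with
      | inl t =>
        simp only [hpoly, Sum.elim_inl]
        apply TropPoly.pairPoly_simple
      | inr i =>
        simp only [hpoly, Sum.elim_inr]
        apply TropPoly.pairPoly_simple
    have hZ : ∀ κ, Good κ → ∀ x, (x ∈ (poly κ).Z ↔ Con κ x) := by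
      intro κ hκ x
      cases κ with
      | inl t =>
        obtain ⟨k, i, j⟩ := t
        simp only [hGood, Sum.elim_inl] at hκ
        obtain ⟨hbi, hbj, hij⟩ := hκ
        have hbi' : 0 < B k i := lt_of_le_of_ne (hB0 k i) (Ne.symm hbi)
        have hbj' : 0 < B k j := lt_of_le_of_ne (hB0 k j) (Ne.symm hbj)
        simp only [hpoly, Sum.elim_inl, hCon]
        set a : ℕ := ((B k j).num * ((B k i).den : ℤ)).toNat with ha
        set b : ℕ := ((B k i).num * ((B k j).den : ℤ)).toNat with hb
        have hdeni : (0:ℤ) < ((B k i).den : ℤ) := by exact_mod_cast (B k i).pos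
        have hdenj : (0:ℤ) < ((B k j).den : ℤ) := by exact_mod_cast (B k j).pos
        have hnumi : 0 < (B k i).num := Rat.num_pos.mpr hbi'
        have hnumj : 0 < (B k j).num := Rat.num_pos.mpr hbj'
        have ha' : ((a : ℕ) : ℤ) = (B k j).num * ((B k i).den : ℤ) :=
          Int.toNat_of_nonneg (by positivity)
        have hb' : ((b : ℕ) : ℤ) = (B k i).num * ((B k j).den : ℤ) :=
          Int.toNat_of_nonneg (by positivity)
        have hane : a ≠ 0 := by
          intro h0
          rw [h0, Nat.cast_zero] at ha'
          nlinarith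
        have hsne : TropPoly.sing i a ≠ TropPoly.sing j b := by
          intro h
          have hcf := congrFun h i
          simp only [TropPoly.sing, if_pos rfl] at hcf
          rw [if_neg hij] at hcf
          exact hane hcf
        rw [TropPoly.pairPoly_Z i j a b (-((a:ℕ):ℝ) * p i) (-((b:ℕ):ℝ) * p j) hsne x]
        set Nq : ℚ := ((B k i).den : ℚ) * ((B k j).den : ℚ) with hNq
        have hNqpos : 0 < Nq := by
          rw [hNq]
          have h1 : (0:ℚ) < ((B k i).den : ℚ) := by exact_mod_cast (B k i).pos
          have h2 : (0:ℚ) < ((B k j).den : ℚ) := by exact_mod_cast (B k j).pos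
          positivity
        have haq : ((a : ℕ) : ℚ) = B k j * Nq := by
          have h1 : (((a:ℕ):ℤ):ℚ) = (((B k j).num : ℤ):ℚ) * (((B k i).den : ℕ):ℚ) := by
            exact_mod_cast congrArg (fun z : ℤ => (z : ℚ)) ha'
          rw [← Rat.mul_den_eq_num (B k j)] at h1
          rw [hNq]
          push_cast at h1 ⊢
          linear_combination h1
        have hbq : ((b : ℕ) : ℚ) = B k i * Nq := by
          have h1 : (((b:ℕ):ℤ):ℚ) = (((B k i).num : ℤ):ℚ) * (((B k j).den : ℕ):ℚ) := by
            exact_mod_cast congrArg (fun z : ℤ => (z : ℚ)) hb'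
          rw [← Rat.mul_den_eq_num (B k i)] at h1
          rw [hNq]
          push_cast at h1 ⊢
          linear_combination h1
        have haR : ((a : ℕ) : ℝ) = ((B k j : ℚ) : ℝ) * ((Nq : ℚ) : ℝ) := by
          exact_mod_cast congrArg (fun q : ℚ => (q : ℝ)) haq
        have hbR : ((b : ℕ) : ℝ) = ((B k i : ℚ) : ℝ) * ((Nq : ℚ) : ℝ) := by
          exact_mod_cast congrArg (fun q : ℚ => (q : ℝ)) hbq
        have hNR : ((Nq : ℚ) : ℝ) ≠ 0 := by
          have : Nq ≠ 0 := ne_of_gt hNqpos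
          exact_mod_cast this
        constructor
        · intro h
          apply mul_right_cancel₀ hNR
          rw [haR, hbR] at h
          linear_combination h
        · intro h
          rw [haR, hbR]
          linear_combination ((Nq : ℚ) : ℝ) * h
      | inr i =>
        simp only [hpoly, Sum.elim_inr, hCon]
        have hsne : TropPoly.sing i 1 ≠ TropPoly.sing i 0 := by
          intro h
          have hcf := congrFun h i
          simp [TropPoly.sing] at hcf
        rw [TropPoly.pairPoly_Z i i 1 0 (-(p i)) 0 hsne x]
        push_cast
        constructor <;> intro h <;> linarith
    refine ⟨Fintype.card ((Fin d × Fin n × Fin n) ⊕ Fin n),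
      fun t => poly (g ((Fintype.equivFin _).symm t)), fun t => hsimple _, ?_⟩
    ext x
    rw [hPcon x, Set.mem_iInter]
    constructor
    · intro h t
      exact (hZ _ (hgGood _) x).mpr (h _ (hgGood _))
    · intro h κ hκ
      have h2 := h ((Fintype.equivFin _) κ)
      simp only [Equiv.symm_apply_apply] at h2
      have hgκ : g κ = κ := by rw [hg]; exact if_pos hκ
      rw [hgκ] at h2
      exact (hZ κ hκ x).mp h2
  · have hPuniv : P = Set.univ := by
      ext x
      simp only [Set.mem_univ, iff_true]
      rw [hPcon]
      intro κ hκ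
      exact absurd ⟨κ, hκ⟩ hE
    refine ⟨0, Fin.elim0, fun i => i.elim0, ?_⟩
    rw [hPuniv]
    exact (Set.iInter_of_empty _).symm


/-- An affine translate of a rational linear subspace of `ℝⁿ` is closed under
coordinatewise maximum iff it is the common corner locus of finitely many simple
tropical polynomials. -/
theorem TropPoly.affine_additive_iff_simple {n : ℕ}
    (S : Set (Fin n → ℚ)) (V : Submodule ℝ (Fin n → ℝ))
    (hV : V = Submodule.span ℝ ((fun v : Fin n → ℚ => fun i => (v i : ℝ)) '' S))
    (p : Fin n → ℝ) (P : Set (Fin n → ℝ))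
    (hP : P = (fun v => p + v) '' (V : Set (Fin n → ℝ))) :
    (∀ u v : Fin n → ℝ, u ∈ P → v ∈ P → u ⊔ v ∈ P) ↔
    ∃ (s : ℕ) (f : Fin s → TropPoly n),
      (∀ i, (f i).Simple) ∧ P = ⋂ i, (f i).Z := by
  classical
  constructor
  · intro hPadd
    have hVadd : ∀ u ∈ V, ∀ v ∈ V, u ⊔ v ∈ V := by
      intro u hu v hv
      have h1 : p + u ∈ P := by rw [hP]; exact ⟨u, hu, rfl⟩
      have h2 : p + v ∈ P := by rw [hP]; exact ⟨v, hv, rfl⟩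
      have h3 := hPadd _ _ h1 h2
      rw [hP] at h3
      obtain ⟨w, hw, hweq⟩ := h3
      have he : (p + u) ⊔ (p + v) = p + (u ⊔ v) := by
        funext i
        simp only [Pi.sup_apply, Pi.add_apply]
        exact max_add_add_left (p i) (u i) (v i)
      rw [he] at hweq
      have hw2 : w = u ⊔ v := add_left_cancel (hweq : p + w = p + (u ⊔ v))
      rwa [← hw2]
    have hWadd : ∀ u ∈ ratPoints V, ∀ v ∈ ratPoints V, u ⊔ v ∈ ratPoints V := by
      intro u hu v hv
      rw [mem_ratPoints] at hu hv ⊢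
      have h : (fun i => (((u ⊔ v) i : ℚ) : ℝ))
          = (fun i => ((u i : ℚ) : ℝ)) ⊔ (fun i => ((v i : ℚ) : ℝ)) := by
        funext i
        simp only [Pi.sup_apply]
        exact Rat.cast_max (u i) (v i)
      rw [h]
      exact hVadd _ hu _ hv
    obtain ⟨d, B, hBW, hB0, hBnz, hBdisj, hchar⟩ :=
      disjq n Finset.univ (by simp) (ratPoints V) hWadd
        (fun w hw i hi => absurd (Finset.mem_univ i) hi)
    have hVle : V ≤ Submodule.span ℝ
        ((fun v : Fin n → ℚ => fun i => ((v i : ℚ) : ℝ)) '' ((ratPoints V : Set (Fin n → ℚ)))) := by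
      conv_lhs => rw [hV]
      apply Submodule.span_le.mpr
      rintro x ⟨v, hv, rfl⟩
      apply Submodule.subset_span
      refine ⟨v, ?_, rfl⟩
      show (fun i => ((v i : ℚ) : ℝ)) ∈ V
      rw [hV]
      exact Submodule.subset_span ⟨v, hv, rfl⟩
    have hVchar : ∀ x : Fin n → ℝ, x ∈ V ↔
        ((∀ i, (∀ k, B k i = 0) → x i = 0) ∧
         ∀ k i j, B k i ≠ 0 → B k j ≠ 0 →
           ((B k j : ℚ) : ℝ) * x i = ((B k i : ℚ) : ℝ) * x j) := by
      intro x
      constructor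
      · intro hx
        have hx' := hVle hx
        refine Submodule.span_induction ?_ ?_ ?_ ?_ hx'
        · rintro y ⟨w, hw, rfl⟩
          obtain ⟨hw1, hw2⟩ := (hchar w).mp hw
          constructor
          · intro i hi
            show ((w i : ℚ) : ℝ) = 0
            rw [hw1 i hi]
            exact Rat.cast_zero
          · intro k i j hbi hbj
            show ((B k j : ℚ) : ℝ) * ((w i : ℚ) : ℝ) = ((B k i : ℚ) : ℝ) * ((w j : ℚ) : ℝ)
            exact_mod_cast hw2 k i j hbi hbj
        · exact ⟨fun i _ => rfl, fun k i j _ _ => by simp⟩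
        · rintro y z hy hz ⟨hy1, hy2⟩ ⟨hz1, hz2⟩
          constructor
          · intro i hi
            simp only [Pi.add_apply]
            rw [hy1 i hi, hz1 i hi, add_zero]
          · intro k i j hbi hbj
            simp only [Pi.add_apply]
            rw [mul_add, mul_add, hy2 k i j hbi hbj, hz2 k i j hbi hbj]
        · rintro c y hy ⟨hy1, hy2⟩
          constructor
          · intro i hi
            simp only [Pi.smul_apply, smul_eq_mul]
            rw [hy1 i hi, mul_zero]
          · intro k i j hbi hbj
            simp only [Pi.smul_apply, smul_eq_mul]
            rw [mul_left_comm, hy2 k i j hbi hbj, mul_left_comm]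
      · rintro ⟨h1, h2⟩
        have hdisjR : ∀ k l, k ≠ l → ∀ i : Fin n,
            ((B k i : ℚ) : ℝ) = 0 ∨ ((B l i : ℚ) : ℝ) = 0 := by
          intro k l hkl i
          rcases hBdisj k l hkl i with h | h
          · left; rw [h]; exact Rat.cast_zero
          · right; rw [h]; exact Rat.cast_zero
        have hnzR : ∀ k, ∃ i : Fin n, ((B k i : ℚ) : ℝ) ≠ 0 := by
          intro k
          obtain ⟨i, hi⟩ := hBnz k
          exact ⟨i, by exact_mod_cast hi⟩
        have h1' : ∀ i, (∀ k, ((B k i : ℚ) : ℝ) = 0) → x i = 0 := by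
          intro i hi
          exact h1 i (fun k => by exact_mod_cast hi k)
        have h2' : ∀ k i j, ((B k i : ℚ) : ℝ) ≠ 0 → ((B k j : ℚ) : ℝ) ≠ 0 →
            ((B k j : ℚ) : ℝ) * x i = ((B k i : ℚ) : ℝ) * x j := by
          intro k i j hbi hbj
          exact h2 k i j (by exact_mod_cast hbi) (by exact_mod_cast hbj)
        obtain ⟨c, hc⟩ := recon (fun k i => ((B k i : ℚ) : ℝ)) hdisjR hnzR x h1' h2'
        rw [hc]
        exact Submodule.sum_mem V (fun k _ => Submodule.smul_mem V _ (hBW k))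
    apply final_construction B hB0 p P
    intro x
    have hx : x ∈ P ↔ x - p ∈ V := by
      rw [hP]
      constructor
      · rintro ⟨v, hv, rfl⟩
        have : p + v - p = v := by abel
        rwa [this]
      · intro h
        exact ⟨x - p, h, show p + (x - p) = x by abel⟩
    rw [hx, hVchar (x - p)]
    constructor
    · rintro ⟨ha, hb⟩
      exact ⟨fun i hi => ha i hi, fun k i j h h' => hb k i j h h'⟩
    · rintro ⟨ha, hb⟩
      exact ⟨fun i hi => ha i hi, fun k i j h h' => hb k i j h h'⟩
  · rintro ⟨s, f, hsimp, hPZ⟩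
    intro u v hu hv
    rw [hPZ] at hu hv ⊢
    rw [Set.mem_iInter] at hu hv ⊢
    intro t
    exact TropPoly.Z_additive (hsimp t) (hu t) (hv t)
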